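/- Let A, B be n×n positive semidefinite complex matrices and let W₁, W₂ be n×n complex matrices that are contractions with respect to the ℓ²→ℓ² operator norm (‖W₁‖ ≤ 1 and ‖W₂‖ ≤ 1). Then there exists an n×n complex matrix C with ‖C‖ ≤ 1 (ℓ²→ℓ² operator norm) such that A^(1/2) W₁ A^(1/2) + B^(1/2) W₂ B^(1/2) = (A + B)^(1/2) · C · (A + B)^(1/2). -/

import Mathlib

open scoped ComplexOrder Matrix.Norms.L2Operator

/-- The positive semidefinite square root of a positive semidefinite matrix
(the definition `Matrix.PosSemidef.sqrt` of the older Mathlib, removed since). -/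
noncomputable def Matrix.PosSemidef.sqrt {n 𝕜 : Type*} [Fintype n] [DecidableEq n] [RCLike 𝕜]
    {A : Matrix n n 𝕜} (hA : A.PosSemidef) : Matrix n n 𝕜 :=
  hA.1.eigenvectorUnitary.1 * Matrix.diagonal ((↑) ∘ (√·) ∘ hA.1.eigenvalues) *
  (star hA.1.eigenvectorUnitary : Matrix n n 𝕜)

/-!
Write `s = √(A+B)` and let `t` be its generalized inverse on the range, `t = s⁺`, so that `s t` is
the orthogonal projection onto the range of `s`. Since `A ≤ A + B`, the kernel of `s` lies in the
kernel of `√A`, hence `√A = X s` and likewise `√B = Y s` for `X = √A t`, `Y = √B t`. Then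
`√A W₁ √A + √B W₂ √B = s (X* W₁ X + Y* W₂ Y) s`, and the middle factor is a contraction because
`X* X + Y* Y = s t` is a projection, i.e. the column `(X, Y)` is a contraction.
-/

open scoped MatrixOrder InnerProductSpace

namespace ContinuousLinearMap

variable {𝕜 E F G : Type*} [RCLike 𝕜]
  [NormedAddCommGroup E] [InnerProductSpace 𝕜 E]
  [NormedAddCommGroup F] [InnerProductSpace 𝕜 F]
  [NormedAddCommGroup G] [InnerProductSpace 𝕜 G]

theorem re_inner_apply_le_of_norm_le_one {w : F →L[𝕜] F} (hw : ‖w‖ ≤ 1) (p q : F) :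
    RCLike.re ⟪w p, q⟫_𝕜 ≤ ‖p‖ * ‖q‖ :=
  calc RCLike.re ⟪w p, q⟫_𝕜 ≤ ‖w p‖ * ‖q‖ := (RCLike.re_le_norm _).trans (norm_inner_le_norm _ _)
    _ ≤ ‖p‖ * ‖q‖ := by
        gcongr
        exact (w.le_opNorm p).trans (mul_le_of_le_one_left (norm_nonneg p) hw)

variable [CompleteSpace E] [CompleteSpace F] [CompleteSpace G]

theorem norm_apply_sq_add_norm_apply_sq_le (x : E →L[𝕜] F) (y : E →L[𝕜] G) (v : E) :
    ‖x v‖ ^ 2 + ‖y v‖ ^ 2 ≤ ‖adjoint x ∘L x + adjoint y ∘L y‖ * ‖v‖ ^ 2 := by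
  set T := adjoint x ∘L x + adjoint y ∘L y
  calc ‖x v‖ ^ 2 + ‖y v‖ ^ 2 = RCLike.re ⟪T v, v⟫_𝕜 := by
        rw [apply_norm_sq_eq_inner_adjoint_left, apply_norm_sq_eq_inner_adjoint_left,
          ← map_add, ← inner_add_left]
        rfl
    _ ≤ ‖T v‖ * ‖v‖ := (RCLike.re_le_norm _).trans (norm_inner_le_norm _ _)
    _ ≤ ‖T‖ * ‖v‖ ^ 2 := by
        rw [sq, ← mul_assoc]
        exact mul_le_mul_of_nonneg_right (T.le_opNorm v) (norm_nonneg v)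

theorem norm_adjoint_comp_comp_add_le_one {x : E →L[𝕜] F} {y : E →L[𝕜] G}
    {w₁ : F →L[𝕜] F} {w₂ : G →L[𝕜] G} (hxy : ‖adjoint x ∘L x + adjoint y ∘L y‖ ≤ 1)
    (hw₁ : ‖w₁‖ ≤ 1) (hw₂ : ‖w₂‖ ≤ 1) :
    ‖adjoint x ∘L w₁ ∘L x + adjoint y ∘L w₂ ∘L y‖ ≤ 1 := by
  have hcol (v : E) (hv : ‖v‖ = 1) : ‖x v‖ ^ 2 + ‖y v‖ ^ 2 ≤ 1 := by
    simpa [hv] using (norm_apply_sq_add_norm_apply_sq_le x y v).trans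
      (mul_le_mul_of_nonneg_right hxy (sq_nonneg ‖v‖))
  refine opNorm_le_of_re_inner_le zero_le_one fun u v hu hv => ?_
  have h₁ := re_inner_apply_le_of_norm_le_one hw₁ (x u) (x v)
  have h₂ := re_inner_apply_le_of_norm_le_one hw₂ (y u) (y v)
  have hinner : ⟪(adjoint x ∘L w₁ ∘L x + adjoint y ∘L w₂ ∘L y) u, v⟫_𝕜 =
      ⟪w₁ (x u), x v⟫_𝕜 + ⟪w₂ (y u), y v⟫_𝕜 := by
    simp only [add_apply, comp_apply, inner_add_left, adjoint_inner_left]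
  rw [hinner, map_add]
  nlinarith [hcol u hu, hcol v hv, sq_nonneg (‖x u‖ - ‖x v‖), sq_nonneg (‖y u‖ - ‖y v‖)]

end ContinuousLinearMap

theorem Matrix.norm_star_mul_mul_add_le_one {n 𝕜 : Type*} [Fintype n] [DecidableEq n] [RCLike 𝕜]
    {X Y W₁ W₂ : Matrix n n 𝕜} (hXY : ‖star X * X + star Y * Y‖ ≤ 1) (hW₁ : ‖W₁‖ ≤ 1)
    (hW₂ : ‖W₂‖ ≤ 1) : ‖star X * W₁ * X + star Y * W₂ * Y‖ ≤ 1 := by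
  set φ := Matrix.toEuclideanCLM (n := n) (𝕜 := 𝕜)
  have hφ (M : Matrix n n 𝕜) : ‖M‖ = ‖φ M‖ := Matrix.cstar_norm_def M
  rw [hφ] at hXY hW₁ hW₂ ⊢
  simp only [map_add, map_mul, map_star, ContinuousLinearMap.star_eq_adjoint,
    ContinuousLinearMap.mul_def, ContinuousLinearMap.comp_assoc] at hXY ⊢
  exact ContinuousLinearMap.norm_adjoint_comp_comp_add_le_one hXY hW₁ hW₂

/-- Take `t = cfc (·⁻¹) s`: every function is continuous on a finite spectrum, and since `0⁻¹ = 0`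
in `ℝ`, `x * x⁻¹ * x = x` holds for every real `x`. -/
theorem IsSelfAdjoint.exists_isSelfAdjoint_commute_mul_mul_self {A : Type*} [Ring A] [StarRing A]
    [Algebra ℝ A] [TopologicalSpace A] [ContinuousFunctionalCalculus ℝ A IsSelfAdjoint]
    [IsTopologicalRing A] [T2Space A] {s : A} (hs : IsSelfAdjoint s)
    (hfin : (spectrum ℝ s).Finite) : ∃ t : A, IsSelfAdjoint t ∧ Commute s t ∧ s * t * s = s := by
  refine ⟨cfc (·⁻¹ : ℝ → ℝ) s, cfc_predicate _ _, (Commute.cfc_real (Commute.refl s) _).symm, ?_⟩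
  have hcont (f : ℝ → ℝ) : ContinuousOn f (spectrum ℝ s) := hfin.continuousOn f
  calc s * cfc (·⁻¹ : ℝ → ℝ) s * s
      = cfc (fun x : ℝ => x * x⁻¹ * x) s := by
        rw [cfc_mul _ _ s (hcont _) (hcont _), cfc_mul _ _ s (hcont _) (hcont _), cfc_id' ℝ s]
    _ = s := by simp only [mul_inv_mul_cancel, cfc_id' ℝ s]

theorem isStarProjection_mul_of_mul_mul_self {R : Type*} [Semigroup R] [StarMul R] {s t : R}
    (hs : IsSelfAdjoint s) (ht : IsSelfAdjoint t) (hst : Commute s t) (hsts : s * t * s = s) :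
    IsStarProjection (s * t) where
  isIdempotentElem := by rw [IsIdempotentElem, ← mul_assoc, hsts]
  isSelfAdjoint := by rw [IsSelfAdjoint, star_mul, hs.star_eq, ht.star_eq, hst.eq]

namespace CFC

variable {A : Type*} [CStarAlgebra A] [PartialOrder A] [StarOrderedRing A]

theorem sqrt_mul_eq_zero_of_le {a d m : A} (ha : 0 ≤ a) (had : a ≤ d) (hdm : d * m = 0) :
    sqrt a * m = 0 := by
  have hle : star m * a * m ≤ 0 := by
    simpa [mul_assoc, hdm] using star_left_conjugate_le_conjugate had m
  have hzero : star m * a * m = 0 := le_antisymm hle (star_left_conjugate_nonneg ha m)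
  rw [← CStarRing.star_mul_self_eq_zero_iff, star_mul, (sqrt_nonneg a).isSelfAdjoint.star_eq,
    mul_assoc, ← mul_assoc (sqrt a), sqrt_mul_sqrt_self a, ← mul_assoc, hzero]

theorem sqrt_mul_mul_sqrt_eq_sqrt_of_le {a d t : A} (ha : 0 ≤ a) (had : a ≤ d)
    (hst : Commute (sqrt d) t) (hsts : sqrt d * t * sqrt d = sqrt d) :
    sqrt a * t * sqrt d = sqrt a := by
  set s := sqrt d
  have hss : s * s = d := sqrt_mul_sqrt_self d (ha.trans had)
  have hsst : s * s * t = s := by rw [mul_assoc, hst.eq, ← mul_assoc, hsts]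
  have hker : d * (1 - s * t) = 0 :=
    calc d * (1 - s * t) = s * (s - s * s * t) := by rw [← hss]; noncomm_ring
      _ = 0 := by rw [hsst, sub_self, mul_zero]
  have hrange := sqrt_mul_eq_zero_of_le ha had hker
  rw [mul_sub, mul_one, sub_eq_zero] at hrange
  rw [mul_assoc, ← hst.eq, ← hrange]

theorem exists_mul_sqrt_add_eq_sqrt {a b : A} (ha : 0 ≤ a) (hb : 0 ≤ b)
    (hfin : (spectrum ℝ (sqrt (a + b))).Finite) :
    ∃ x y : A, ‖star x * x + star y * y‖ ≤ 1 ∧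
      x * sqrt (a + b) = sqrt a ∧ y * sqrt (a + b) = sqrt b := by
  set s := sqrt (a + b)
  have hs : IsSelfAdjoint s := (sqrt_nonneg (a + b)).isSelfAdjoint
  obtain ⟨t, ht, hst, hsts⟩ := hs.exists_isSelfAdjoint_commute_mul_mul_self hfin
  have hp := isStarProjection_mul_of_mul_mul_self hs ht hst hsts
  have hcol : star (sqrt a * t) * (sqrt a * t) + star (sqrt b * t) * (sqrt b * t) = s * t :=
    calc star (sqrt a * t) * (sqrt a * t) + star (sqrt b * t) * (sqrt b * t)
        = t * (sqrt a * sqrt a + sqrt b * sqrt b) * t := by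
          simp only [star_mul, ht.star_eq, (sqrt_nonneg a).isSelfAdjoint.star_eq,
            (sqrt_nonneg b).isSelfAdjoint.star_eq]
          noncomm_ring
      _ = t * s * (s * t) := by
          rw [sqrt_mul_sqrt_self a, sqrt_mul_sqrt_self b, ← sqrt_mul_sqrt_self (a + b) (add_nonneg ha hb)]
          noncomm_ring
      _ = s * t := by rw [← hst.eq, hp.isIdempotentElem.eq]
  refine ⟨sqrt a * t, sqrt b * t, hcol ▸ hp.norm_le,
    sqrt_mul_mul_sqrt_eq_sqrt_of_le ha (le_add_of_nonneg_right hb) hst hsts,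
    sqrt_mul_mul_sqrt_eq_sqrt_of_le hb (le_add_of_nonneg_left ha) hst hsts⟩

end CFC

theorem Matrix.PosSemidef.sqrt_eq_cfcSqrt {n 𝕜 : Type*} [Fintype n] [DecidableEq n] [RCLike 𝕜]
    {A : Matrix n n 𝕜} (hA : A.PosSemidef) : hA.sqrt = CFC.sqrt A := by
  rw [CFC.sqrt_eq_real_sqrt A hA.nonneg, cfcₙ_eq_cfc, hA.1.cfc_eq]
  rfl

theorem sqrt_contraction_sqrt_factorization {n : ℕ}
    (A B W₁ W₂ : Matrix (Fin n) (Fin n) ℂ)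
    (hA : A.PosSemidef) (hB : B.PosSemidef)
    (hW₁ : ‖W₁‖ ≤ 1) (hW₂ : ‖W₂‖ ≤ 1) :
    ∃ C : Matrix (Fin n) (Fin n) ℂ, ‖C‖ ≤ 1 ∧
      hA.sqrt * W₁ * hA.sqrt + hB.sqrt * W₂ * hB.sqrt =
        (hA.add hB).sqrt * C * (hA.add hB).sqrt := by
  obtain ⟨X, Y, hXY, hX, hY⟩ :=
    CFC.exists_mul_sqrt_add_eq_sqrt hA.nonneg hB.nonneg Matrix.finite_real_spectrum
  refine ⟨star X * W₁ * X + star Y * W₂ * Y, Matrix.norm_star_mul_mul_add_le_one hXY hW₁ hW₂, ?_⟩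
  simp only [Matrix.PosSemidef.sqrt_eq_cfcSqrt]
  set s := CFC.sqrt (A + B)
  have hs : star s = s := (CFC.sqrt_nonneg (A + B)).isSelfAdjoint.star_eq
  calc CFC.sqrt A * W₁ * CFC.sqrt A + CFC.sqrt B * W₂ * CFC.sqrt B
      = star (X * s) * W₁ * (X * s) + star (Y * s) * W₂ * (Y * s) := by
        rw [hX, hY, (CFC.sqrt_nonneg A).isSelfAdjoint.star_eq,
          (CFC.sqrt_nonneg B).isSelfAdjoint.star_eq]
    _ = s * (star X * W₁ * X + star Y * W₂ * Y) * s := by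
        rw [star_mul, star_mul, hs]
        noncomm_ring
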